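/- arXiv:1812.09390 — 2 statements merged into one kernel-verified Lean document; each statement's English description precedes it below -/
import Mathlib

section
/- Fix b < 0 and define β(a) = √((1/2)(a² − b² − 9/4) + (1/2)√((a² − b² − 9/4)² + 4a²b²)) for a ∈ ℝ. Then a·β'(a) − β(a) = 0 if and only if a = 0; equivalently, the equation (b²+9/4)²((a²−b²−9/4)² + 4a²b²) = (b⁴ + 81/16 + a²b² − 9a²/4 + 9b²/2)² holds only when 9a⁴b² = 0. -/
/-- For fixed `b < 0` and
`β(a) = √((1/2)(a² - b² - 9/4) + (1/2)√((a² - b² - 9/4)² + 4a²b²))`,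
one has `a·β'(a) - β(a) = 0` iff `a = 0`; equivalently, the squared equality
`(b²+9/4)²((a²-b²-9/4)² + 4a²b²) = (b⁴ + 81/16 + a²b² - 9a²/4 + 9b²/2)²`
holds only when `9a⁴b² = 0`. -/
theorem stmt5 (b : ℝ) (hb : b < 0) :
    (∀ a : ℝ,
      a * deriv (fun a : ℝ => Real.sqrt ((1 / 2) * (a ^ 2 - b ^ 2 - 9 / 4)
          + (1 / 2) * Real.sqrt ((a ^ 2 - b ^ 2 - 9 / 4) ^ 2 + 4 * a ^ 2 * b ^ 2))) a
        - Real.sqrt ((1 / 2) * (a ^ 2 - b ^ 2 - 9 / 4)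
          + (1 / 2) * Real.sqrt ((a ^ 2 - b ^ 2 - 9 / 4) ^ 2 + 4 * a ^ 2 * b ^ 2)) = 0
        ↔ a = 0) ∧
    (∀ a : ℝ,
      (b ^ 2 + 9 / 4) ^ 2 * ((a ^ 2 - b ^ 2 - 9 / 4) ^ 2 + 4 * a ^ 2 * b ^ 2)
          = (b ^ 4 + 81 / 16 + a ^ 2 * b ^ 2 - 9 * a ^ 2 / 4 + 9 * b ^ 2 / 2) ^ 2
        → 9 * a ^ 4 * b ^ 2 = 0) := by
  constructor
  · intro a
    constructor
    · intro h
      by_contra ha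
      have hbne : b ≠ 0 := hb.ne
      have hb2 : (0 : ℝ) < b ^ 2 := by positivity
      have ha2 : (0 : ℝ) < a ^ 2 := by positivity
      set u : ℝ := a ^ 2 - b ^ 2 - 9 / 4 with hu
      set sg : ℝ := Real.sqrt (u ^ 2 + 4 * a ^ 2 * b ^ 2) with hsg
      set sf : ℝ := Real.sqrt ((1 / 2) * u + (1 / 2) * sg) with hsf
      clear_value sf sg u
      have hgpos : 0 < u ^ 2 + 4 * a ^ 2 * b ^ 2 := by rw [hu]; positivity
      have hsgpos : 0 < sg := by rw [hsg]; exact Real.sqrt_pos.mpr hgpos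
      have hsg2 : sg ^ 2 = u ^ 2 + 4 * a ^ 2 * b ^ 2 := by rw [hsg]; exact Real.sq_sqrt hgpos.le
      have hsg_gt : |u| < sg := by
        rw [hsg]
        refine (Real.lt_sqrt (abs_nonneg u)).mpr ?_
        rw [sq_abs]
        nlinarith
      have hfpos : 0 < (1 / 2) * u + (1 / 2) * sg := by
        have h2 := neg_abs_le u
        linarith
      have hsfpos : 0 < sf := by rw [hsf]; exact Real.sqrt_pos.mpr hfpos
      have hsf2 : sf ^ 2 = (1 / 2) * u + (1 / 2) * sg := by rw [hsf]; exact Real.sq_sqrt hfpos.le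
      -- derivatives
      have h1 : HasDerivAt (fun x : ℝ => x ^ 2 - b ^ 2 - 9 / 4) (2 * a) a := by
        simpa using ((hasDerivAt_pow 2 a).sub_const (b ^ 2)).sub_const (9 / 4)
      have h3 : HasDerivAt (fun x : ℝ => 4 * x ^ 2 * b ^ 2) (4 * (2 * a) * b ^ 2) a := by
        have := ((hasDerivAt_pow 2 a).const_mul 4).mul_const (b ^ 2)
        refine this.congr_deriv ?_
        ring
      have hginner : HasDerivAt (fun x : ℝ => (x ^ 2 - b ^ 2 - 9 / 4) ^ 2 + 4 * x ^ 2 * b ^ 2)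
          (4 * a * u + 8 * a * b ^ 2) a := by
        refine ((h1.pow 2).add h3).congr_deriv ?_
        rw [hu]; push_cast; ring
      have hgs : HasDerivAt
          (fun x : ℝ => Real.sqrt ((x ^ 2 - b ^ 2 - 9 / 4) ^ 2 + 4 * x ^ 2 * b ^ 2))
          ((4 * a * u + 8 * a * b ^ 2) / (2 * sg)) a := by
        have hne : (a ^ 2 - b ^ 2 - 9 / 4) ^ 2 + 4 * a ^ 2 * b ^ 2 ≠ 0 := by
          rw [← hu]; exact hgpos.ne'
        have := hginner.sqrt hne
        rwa [← hu, ← hsg] at this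
      have hfd : HasDerivAt (fun x : ℝ => (1 / 2) * (x ^ 2 - b ^ 2 - 9 / 4)
          + (1 / 2) * Real.sqrt ((x ^ 2 - b ^ 2 - 9 / 4) ^ 2 + 4 * x ^ 2 * b ^ 2))
          ((1 / 2) * (2 * a) + (1 / 2) * ((4 * a * u + 8 * a * b ^ 2) / (2 * sg))) a :=
        (h1.const_mul (1 / 2)).add (hgs.const_mul (1 / 2))
      have hβ : HasDerivAt (fun x : ℝ => Real.sqrt ((1 / 2) * (x ^ 2 - b ^ 2 - 9 / 4)
          + (1 / 2) * Real.sqrt ((x ^ 2 - b ^ 2 - 9 / 4) ^ 2 + 4 * x ^ 2 * b ^ 2)))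
          (((1 / 2) * (2 * a) + (1 / 2) * ((4 * a * u + 8 * a * b ^ 2) / (2 * sg)))
            / (2 * sf)) a := by
        have hne : (1 / 2) * (a ^ 2 - b ^ 2 - 9 / 4)
            + (1 / 2) * Real.sqrt ((a ^ 2 - b ^ 2 - 9 / 4) ^ 2 + 4 * a ^ 2 * b ^ 2) ≠ 0 := by
          rw [← hu, ← hsg]; exact hfpos.ne'
        have := hfd.sqrt hne
        rwa [← hu, ← hsg, ← hsf] at this
      rw [hβ.deriv] at h
      field_simp at h
      have key2 : a ^ 2 * sg + a ^ 2 * u + 2 * a ^ 2 * b ^ 2 = u * sg + sg ^ 2 := by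
        linear_combination (1 / 4) * h + (2 * sg) * hsf2
      have key3 : (b ^ 2 + 9 / 4) * sg = u ^ 2 - a ^ 2 * u + 2 * a ^ 2 * b ^ 2 := by
        linear_combination key2 + hsg2 + sg * hu
      subst hu
      have key4 : (b ^ 2 + 9 / 4) ^ 2 * ((a ^ 2 - b ^ 2 - 9 / 4) ^ 2 + 4 * a ^ 2 * b ^ 2)
          = (b ^ 4 + 81 / 16 + a ^ 2 * b ^ 2 - 9 * a ^ 2 / 4 + 9 * b ^ 2 / 2) ^ 2 := by
        linear_combination ((b ^ 2 + 9 / 4) * sg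
            + (b ^ 4 + 81 / 16 + a ^ 2 * b ^ 2 - 9 * a ^ 2 / 4 + 9 * b ^ 2 / 2)) * key3
          - (b ^ 2 + 9 / 4) ^ 2 * hsg2
      have h9 : 9 * a ^ 4 * b ^ 2 = 0 := by linear_combination key4
      have hpos : 0 < 9 * a ^ 4 * b ^ 2 := by positivity
      linarith
    · rintro rfl
      have e1 : ((0 : ℝ) ^ 2 - b ^ 2 - 9 / 4) ^ 2 + 4 * (0 : ℝ) ^ 2 * b ^ 2
          = (b ^ 2 + 9 / 4) ^ 2 := by ring
      rw [e1, Real.sqrt_sq (by positivity)]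
      have e2 : (1 / 2) * ((0 : ℝ) ^ 2 - b ^ 2 - 9 / 4) + (1 / 2) * (b ^ 2 + 9 / 4) = 0 := by
        ring
      rw [e2, Real.sqrt_zero, zero_mul, sub_zero]
  · intro a h
    linear_combination h
end

section
/- Let g : (r_−, r_+) → ℝ be defined by g(r) = Π_{α∈I}|(r−r_α)/(𝔯−r_α)|^{c_α} with positive exponents c_+ on the factor (r_+−r) [i.e. the Regge–Wheeler relation e^{−Λx/(3A_+r_+²)} = g_+(r)]. Then the asymptotic estimate holds: F(r(x)) + |r(x) − r_±| ≤ C·exp(2κ_± x) as x → ±∞, where 2κ_± = F'(r_±) and x(r) = −(3/Λ)Σ_α A_α r_α² ln|(r−r_α)/(𝔯−r_α)|. -/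
/-!
Write `L_α(r) = log |(r - r_α)/(𝔯 - r_α)|` and `c_α = -(3/Λ) A_α r_α²`, so that
`x(r) = Σ_α c_α L_α(r)`. Since `F` has simple roots, `F'(r_±) = -Λ/(3 r_±² A_±)`, i.e.
`c_± · 2κ_± = 1`. Multiplying `x = c_+ L_+ + (rest)` by `2κ_+` and exponentiating gives
`|r - r_+| = |𝔯 - r_+| e^{2κ_+ x} e^{-2κ_+ (rest)}`. In the rest, `L_n` and `L_c` are bounded on
`[r_-, r_+]`, and `c_- L_-` is bounded above because `c_-` and `c_+` have opposite signs; so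
`|r - r_+| ≤ C e^{2κ_+ x}`, and `F(r) ≤ K |r - r_+|` finishes the estimate. The same argument
works at `r_-`. The limits `x → ∓∞` at `r_∓` make `x` onto `ℝ`, so `x(r(x)) = x`.
-/

open Filter Topology Set Real

noncomputable def logRatio (a 𝔯 r : ℝ) : ℝ := log |(r - a) / (𝔯 - a)|

section logRatio

variable {a 𝔯 r : ℝ}

theorem exp_logRatio (h𝔯 : 𝔯 ≠ a) (hr : r ≠ a) :
    exp (logRatio a 𝔯 r) = |r - a| / |𝔯 - a| := by
  rw [logRatio, exp_log (abs_pos.2 (div_ne_zero (sub_ne_zero.2 hr) (sub_ne_zero.2 h𝔯))), abs_div]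

theorem continuousAt_logRatio (h𝔯 : 𝔯 ≠ a) (hr : r ≠ a) : ContinuousAt (logRatio a 𝔯) r :=
  ((continuousAt_id.sub continuousAt_const).div_const _).abs.log
    (abs_ne_zero.2 (div_ne_zero (sub_ne_zero.2 hr) (sub_ne_zero.2 h𝔯)))

theorem continuousOn_logRatio {s : Set ℝ} (h𝔯 : 𝔯 ≠ a) (has : a ∉ s) :
    ContinuousOn (logRatio a 𝔯) s := fun _ hr =>
  (continuousAt_logRatio h𝔯 (ne_of_mem_of_not_mem hr has)).continuousWithinAt

theorem tendsto_logRatio_nhdsNE (h𝔯 : 𝔯 ≠ a) : Tendsto (logRatio a 𝔯) (𝓝[≠] a) atBot := by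
  have h : Tendsto (fun r => (r - a) / (𝔯 - a)) (𝓝[≠] a) (𝓝[≠] 0) := by
    refine tendsto_nhdsWithin_of_tendsto_nhds_of_eventually_within _ ?_ ?_
    · simpa using (((continuous_sub_right a).div_const (𝔯 - a)).tendsto a).mono_left
        nhdsWithin_le_nhds
    · filter_upwards [self_mem_nhdsWithin] with r hr
      exact div_ne_zero (sub_ne_zero.2 hr) (sub_ne_zero.2 h𝔯)
  exact (tendsto_log_nhdsNE_zero.comp h).congr fun r => (log_abs _).symm

theorem logRatio_le_logRatio {t : ℝ} (h𝔯 : 𝔯 ≠ a) (hr : r ≠ a) (h : |r - a| ≤ |t - a|) :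
    logRatio a 𝔯 r ≤ logRatio a 𝔯 t := by
  refine log_le_log (abs_pos.2 (div_ne_zero (sub_ne_zero.2 hr) (sub_ne_zero.2 h𝔯))) ?_
  rw [abs_div, abs_div]
  gcongr

theorem abs_sub_le_of_eq_mul_logRatio_add {c k x G B : ℝ} (h𝔯 : 𝔯 ≠ a) (hr : r ≠ a)
    (hck : c * k = 1) (hx : x = c * logRatio a 𝔯 r + G) (hG : B ≤ k * G) :
    |r - a| ≤ |𝔯 - a| * exp (-B) * exp (k * x) := by
  have hlog : logRatio a 𝔯 r = k * x - k * G := by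
    linear_combination (-k) * hx - logRatio a 𝔯 r * hck
  have h𝔯a : 0 < |𝔯 - a| := abs_pos.2 (sub_ne_zero.2 h𝔯)
  calc |r - a| = |𝔯 - a| * exp (logRatio a 𝔯 r) := by
        rw [exp_logRatio h𝔯 hr]; field_simp
    _ ≤ |𝔯 - a| * exp (-B + k * x) := by gcongr; linarith
    _ = |𝔯 - a| * exp (-B) * exp (k * x) := by rw [exp_add, mul_assoc]

theorem surjOn_Ioo_of_eq_mul_logRatio_add {X H : ℝ → ℝ} {b c c' : ℝ} (hab : a < b)
    (h𝔯 : 𝔯 ∈ Ioo a b) (hc : 0 < c) (hc' : c' < 0) (hH : ContinuousOn H (Icc a b))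
    (hX : ∀ r ∈ Ioo a b, X r = c * logRatio a 𝔯 r + c' * logRatio b 𝔯 r + H r) :
    SurjOn X (Ioo a b) univ := by
  have ha : 𝔯 ≠ a := h𝔯.1.ne'
  have hb : 𝔯 ≠ b := h𝔯.2.ne
  have hcont : ContinuousOn X (Ioo a b) :=
    (((continuousOn_const.mul (continuousOn_logRatio ha (by simp))).add
      (continuousOn_const.mul (continuousOn_logRatio hb (by simp)))).add
      (hH.mono Ioo_subset_Icc_self)).congr hX
  have hbot : Tendsto X (𝓝[>] a) atBot := by
    have hrest : Tendsto (fun r => c' * logRatio b 𝔯 r + H r) (𝓝[>] a)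
        (𝓝 (c' * logRatio b 𝔯 a + H a)) :=
      ((continuousAt_const.mul (continuousAt_logRatio hb hab.ne)).continuousWithinAt.add
        ((hH a (left_mem_Icc.2 hab.le)).mono_of_mem_nhdsWithin (Icc_mem_nhdsGT hab))).tendsto
    refine (((tendsto_logRatio_nhdsNE ha).mono_left (nhdsGT_le_nhdsNE a)).const_mul_atBot hc
      |>.atBot_add hrest).congr' ?_
    filter_upwards [Ioo_mem_nhdsGT hab] with r hr
    rw [hX r hr, add_assoc]
  have htop : Tendsto X (𝓝[<] b) atTop := by
    have hrest : Tendsto (fun r => c * logRatio a 𝔯 r + H r) (𝓝[<] b)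
        (𝓝 (c * logRatio a 𝔯 b + H b)) :=
      ((continuousAt_const.mul (continuousAt_logRatio ha hab.ne')).continuousWithinAt.add
        ((hH b (right_mem_Icc.2 hab.le)).mono_of_mem_nhdsWithin (Icc_mem_nhdsLT hab))).tendsto
    refine (((tendsto_logRatio_nhdsNE hb).mono_left (nhdsLT_le_nhdsNE b)).const_mul_atBot_of_neg
      hc' |>.atTop_add hrest).congr' ?_
    filter_upwards [Ioo_mem_nhdsLT hab] with r hr
    rw [hX r hr]
    ring
  exact hcont.surjOn_of_tendsto (nonempty_Ioo.2 hab)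
    ((tendsto_comp_coe_Ioo_atBot hab).2 hbot) ((tendsto_comp_coe_Ioo_atTop hab).2 htop)

theorem exists_abs_sub_le_mul_exp_of_eq_mul_logRatio_add {s : Set ℝ} {X H : ℝ → ℝ}
    {b c c' k D : ℝ} (ha : 𝔯 ≠ a) (hb : 𝔯 ≠ b) (has : a ∉ s) (hbs : b ∉ s) (hs : s ⊆ uIcc a b)
    (hck : c * k = 1) (hcc' : c * c' ≤ 0)
    (hH : ∀ r ∈ s, |H r| ≤ D)
    (hX : ∀ r ∈ s, X r = c * logRatio a 𝔯 r + c' * logRatio b 𝔯 r + H r) :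
    ∃ C > 0, ∀ r ∈ s, |r - a| ≤ C * exp (k * X r) := by
  have hkc' : k * c' ≤ 0 := by
    have : k * c' = c * c' * k ^ 2 := by linear_combination (-(k * c')) * hck
    exact this ▸ mul_nonpos_of_nonpos_of_nonneg hcc' (sq_nonneg k)
  set B := k * c' * logRatio b 𝔯 a - |k| * D
  refine ⟨|𝔯 - a| * exp (-B), by positivity, fun r hr => ?_⟩
  refine abs_sub_le_of_eq_mul_logRatio_add ha (ne_of_mem_of_not_mem hr has) hck
    (by rw [hX r hr, add_assoc]) ?_
  have hlog : k * c' * logRatio b 𝔯 a ≤ k * c' * logRatio b 𝔯 r :=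
    mul_le_mul_of_nonpos_left (logRatio_le_logRatio hb (ne_of_mem_of_not_mem hr hbs)
      (abs_sub_left_of_mem_uIcc (uIcc_comm a b ▸ hs hr))) hkc'
  have hkH : -(|k| * D) ≤ k * H r :=
    neg_le_of_abs_le ((abs_mul k (H r)).trans_le (by gcongr; exact hH r hr))
  linarith

end logRatio

theorem add_abs_sub_le_mul_exp_of_inverse {F X rfun : ℝ → ℝ} {s : Set ℝ} {a k K C : ℝ}
    (hK : 0 ≤ K) (hF : ∀ r ∈ s, F r ≤ K * |r - a|) (hC : ∀ r ∈ s, |r - a| ≤ C * exp (k * X r))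
    (hrange : ∀ x, rfun x ∈ s) (hXr : ∀ x, X (rfun x) = x) (x : ℝ) :
    F (rfun x) + |rfun x - a| ≤ (K + 1) * C * exp (k * x) := calc
  _ ≤ (K + 1) * |rfun x - a| := by linarith [hF _ (hrange x)]
  _ ≤ (K + 1) * (C * exp (k * x)) := by gcongr; simpa only [hXr] using hC _ (hrange x)
  _ = _ := by ring

theorem exists_add_abs_sub_le_mul_exp_of_eq_mul_logRatio_add {F X H rfun : ℝ → ℝ}
    {a b 𝔯 c₁ c₂ k₁ k₂ K : ℝ} (hab : a < b) (h𝔯 : 𝔯 ∈ Ioo a b) (hc₁ : 0 < c₁) (hc₂ : c₂ < 0)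
    (hk₁ : c₁ * k₁ = 1) (hk₂ : c₂ * k₂ = 1) (hH : ContinuousOn H (Icc a b))
    (hX : ∀ r ∈ Ioo a b, X r = c₁ * logRatio a 𝔯 r + c₂ * logRatio b 𝔯 r + H r)
    (hrfun : ∀ r ∈ Ioo a b, rfun (X r) = r) (hrange : ∀ x, rfun x ∈ Ioo a b) (hK : 0 ≤ K)
    (hF : ∀ r ∈ Ioo a b, F r ≤ K * |r - a| ∧ F r ≤ K * |r - b|) :
    ∃ C > 0, ∀ x, F (rfun x) + |rfun x - a| ≤ C * exp (k₁ * x) ∧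
      F (rfun x) + |rfun x - b| ≤ C * exp (k₂ * x) := by
  have hXr : ∀ x, X (rfun x) = x := fun x => by
    obtain ⟨r, hr, rfl⟩ := surjOn_Ioo_of_eq_mul_logRatio_add hab h𝔯 hc₁ hc₂ hH hX (mem_univ x)
    rw [hrfun r hr]
  obtain ⟨D, hD⟩ := isCompact_Icc.exists_bound_of_continuousOn hH
  have hHD : ∀ r ∈ Ioo a b, |H r| ≤ D := fun r hr => hD r (Ioo_subset_Icc_self hr)
  have hIoo : Ioo a b ⊆ uIcc a b := Ioo_subset_Icc_self.trans Icc_subset_uIcc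
  obtain ⟨C₁, hC₁, h₁⟩ := exists_abs_sub_le_mul_exp_of_eq_mul_logRatio_add h𝔯.1.ne' h𝔯.2.ne
    (by simp) (by simp) hIoo hk₁ (mul_neg_of_pos_of_neg hc₁ hc₂).le hHD hX
  obtain ⟨C₂, hC₂, h₂⟩ := exists_abs_sub_le_mul_exp_of_eq_mul_logRatio_add (X := X) h𝔯.2.ne
    h𝔯.1.ne' (by simp) (by simp) (uIcc_comm a b ▸ hIoo) hk₂ (mul_neg_of_neg_of_pos hc₂ hc₁).le
    hHD (fun r hr => by rw [hX r hr]; ring)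
  refine ⟨(K + 1) * max C₁ C₂, by positivity, fun x => ⟨?_, ?_⟩⟩
  · exact add_abs_sub_le_mul_exp_of_inverse hK (fun r hr => (hF r hr).1)
      (fun r hr => (h₁ r hr).trans (by gcongr; exact le_max_left _ _)) hrange hXr x
  · exact add_abs_sub_le_mul_exp_of_inverse hK (fun r hr => (hF r hr).2)
      (fun r hr => (h₂ r hr).trans (by gcongr; exact le_max_right _ _)) hrange hXr x

theorem hasDerivAt_of_eventually_eq_mul_sub {F g : ℝ → ℝ} {s : ℝ} (hg : DifferentiableAt ℝ g s)
    (hF : ∀ᶠ r in 𝓝 s, F r = g r * (r - s)) : HasDerivAt F (g s) s := by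
  have h := hg.hasDerivAt.mul ((hasDerivAt_id s).sub_const s)
  simp only [id_eq, sub_self, mul_zero, mul_one, zero_add] at h
  exact h.congr_of_eventuallyEq hF

/-- `tortoiseCoeff Λ A_α r_α` is the coefficient `c_α` of `L_α = logRatio r_α 𝔯` in `x`. -/
noncomputable def tortoiseCoeff (Λ A s : ℝ) : ℝ := -(3 / Λ) * (A * s ^ 2)

theorem tortoiseCoeff_pos {Λ A s : ℝ} (hΛ : 0 < Λ) (hs : s ≠ 0) (hA : A < 0) :
    0 < tortoiseCoeff Λ A s := by
  have : 0 < 3 / Λ * s ^ 2 := by positivity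
  rw [tortoiseCoeff]
  nlinarith

theorem tortoiseCoeff_neg {Λ A s : ℝ} (hΛ : 0 < Λ) (hs : s ≠ 0) (hA : 0 < A) :
    tortoiseCoeff Λ A s < 0 := by
  have : 0 < 3 / Λ * s ^ 2 := by positivity
  rw [tortoiseCoeff]
  nlinarith

theorem tortoiseCoeff_mul_eq_one {F : ℝ → ℝ} {Λ p q t s κ : ℝ} (hΛ : Λ ≠ 0) (hs : s ≠ 0)
    (hpqt : (s - p) * (s - q) * (s - t) ≠ 0) {A : ℝ} (hA : A = ((s - p) * (s - q) * (s - t))⁻¹)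
    (hF : ∀ r, r ≠ 0 → F r = -(Λ / (3 * r ^ 2)) * ((r - p) * (r - q) * (r - t) * (r - s)))
    (hκ : HasDerivAt F κ s) : tortoiseCoeff Λ A s * κ = 1 := by
  have hroot : HasDerivAt F (-(Λ / (3 * s ^ 2)) * ((s - p) * (s - q) * (s - t))) s := by
    refine hasDerivAt_of_eventually_eq_mul_sub (g := fun r => -(Λ / (3 * r ^ 2)) *
      ((r - p) * (r - q) * (r - t))) (by fun_prop (disch := positivity)) ?_
    filter_upwards [eventually_ne_nhds hs] with r hr
    rw [hF r hr]
    ring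
  rw [hκ.unique hroot, tortoiseCoeff, hA]
  field_simp
  exact div_self hpqt

theorem quartic_le_mul_abs_sub {Λ rn rc rm rp r : ℝ} (hΛ : 0 ≤ Λ) (hn : rn ≤ rm) (hc : rc ≤ rm)
    (hm : 0 < rm) (hr : r ∈ Ioo rm rp) :
    -(Λ / (3 * r ^ 2)) * ((r - rn) * (r - rc) * (r - rm) * (r - rp)) ≤
        Λ / (3 * rm ^ 2) * ((rp - rn) * (rp - rc) * (rp - rm)) * |r - rm| ∧
      -(Λ / (3 * r ^ 2)) * ((r - rn) * (r - rc) * (r - rm) * (r - rp)) ≤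
        Λ / (3 * rm ^ 2) * ((rp - rn) * (rp - rc) * (rp - rm)) * |r - rp| := by
  obtain ⟨hr₁, hr₂⟩ := hr
  have hg : Λ / (3 * r ^ 2) * ((r - rn) * (r - rc)) ≤
      Λ / (3 * rm ^ 2) * ((rp - rn) * (rp - rc)) := by
    gcongr <;> nlinarith
  have hg₀ : 0 ≤ Λ / (3 * r ^ 2) * ((r - rn) * (r - rc)) := by
    have : 0 ≤ (r - rn) * (r - rc) := by nlinarith
    positivity
  have key : ∀ u v, 0 ≤ u → v ≤ rp - rm → 0 ≤ v →
      Λ / (3 * r ^ 2) * ((r - rn) * (r - rc)) * (u * v) ≤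
        Λ / (3 * rm ^ 2) * ((rp - rn) * (rp - rc) * (rp - rm)) * u := fun u v hu hv hv₀ => calc
    _ ≤ Λ / (3 * rm ^ 2) * ((rp - rn) * (rp - rc)) * (u * (rp - rm)) := by
      gcongr
      exact hg₀.trans hg
    _ = _ := by ring
  rw [abs_of_pos (sub_pos.2 hr₁), abs_of_neg (sub_neg.2 hr₂), neg_sub]
  constructor
  · convert key (r - rm) (rp - r) (by linarith) (by linarith) (by linarith) using 1
    ring
  · convert key (rp - r) (r - rm) (by linarith) (by linarith) (by linarith) using 1
    ring

theorem stmt14_general (Λ : ℝ) (hΛ : 0 < Λ)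
    (rn rc rm rp 𝔯 : ℝ) (hord : rn < 0 ∧ 0 < rc ∧ rc < rm ∧ rm < rp)
    (h𝔯 : 𝔯 ∈ Set.Ioo rm rp)
    (F : ℝ → ℝ)
    (hfact : ∀ r : ℝ, r ≠ 0 →
      F r = -(Λ / (3 * r ^ 2)) * ((r - rn) * (r - rc) * (r - rm) * (r - rp)))
    (An Ac Am Ap : ℝ)
    (hAm : Am = ((rm - rn) * (rm - rc) * (rm - rp))⁻¹)
    (hAp : Ap = ((rp - rn) * (rp - rc) * (rp - rm))⁻¹)
    (X : ℝ → ℝ)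
    (hX : ∀ r ∈ Set.Ioo rm rp, X r = -(3 / Λ) *
      (An * rn ^ 2 * Real.log |(r - rn) / (𝔯 - rn)|
        + Ac * rc ^ 2 * Real.log |(r - rc) / (𝔯 - rc)|
        + Am * rm ^ 2 * Real.log |(r - rm) / (𝔯 - rm)|
        + Ap * rp ^ 2 * Real.log |(r - rp) / (𝔯 - rp)|))
    (rfun : ℝ → ℝ)
    (hrfun : ∀ r ∈ Set.Ioo rm rp, rfun (X r) = r)
    (hrange : ∀ x : ℝ, rfun x ∈ Set.Ioo rm rp)
    (κm κp : ℝ) (hκm : HasDerivAt F (2 * κm) rm) (hκp : HasDerivAt F (2 * κp) rp) :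
    ∃ C : ℝ, 0 < C ∧
      (∀ᶠ x in atTop, F (rfun x) + |rfun x - rp| ≤ C * Real.exp (2 * κp * x)) ∧
      (∀ᶠ x in atBot, F (rfun x) + |rfun x - rm| ≤ C * Real.exp (2 * κm * x)) := by
  obtain ⟨hrn, hrc, hrcm, hrmp⟩ := hord
  have hrm : 0 < rm := hrc.trans hrcm
  have hPm : (rm - rn) * (rm - rc) * (rm - rp) < 0 :=
    mul_neg_of_pos_of_neg (mul_pos (by linarith) (by linarith)) (by linarith)
  have hPp : 0 < (rp - rn) * (rp - rc) * (rp - rm) :=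
    mul_pos (mul_pos (by linarith) (by linarith)) (by linarith)
  set H : ℝ → ℝ := fun r =>
    tortoiseCoeff Λ An rn * logRatio rn 𝔯 r + tortoiseCoeff Λ Ac rc * logRatio rc 𝔯 r
  have hH : ContinuousOn H (Icc rm rp) :=
    (continuousOn_const.mul (continuousOn_logRatio (by linarith [h𝔯.1]) fun h => by
      linarith [h.1])).add
    (continuousOn_const.mul (continuousOn_logRatio (by linarith [h𝔯.1]) fun h => by
      linarith [h.1]))
  have hXH : ∀ r ∈ Ioo rm rp, X r = tortoiseCoeff Λ Am rm * logRatio rm 𝔯 r +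
      tortoiseCoeff Λ Ap rp * logRatio rp 𝔯 r + H r := fun r hr => by
    simp only [hX r hr, H, tortoiseCoeff, logRatio]
    ring
  have hκm' := tortoiseCoeff_mul_eq_one hΛ.ne' hrm.ne' hPm.ne hAm
    (fun r hr => by rw [hfact r hr]; ring) hκm
  have hκp' := tortoiseCoeff_mul_eq_one hΛ.ne' (by linarith) hPp.ne' hAp hfact hκp
  set K := Λ / (3 * rm ^ 2) * ((rp - rn) * (rp - rc) * (rp - rm))
  have hF : ∀ r ∈ Ioo rm rp, F r ≤ K * |r - rm| ∧ F r ≤ K * |r - rp| := fun r hr => by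
    rw [hfact r (hrm.trans hr.1).ne']
    exact quartic_le_mul_abs_sub hΛ.le (by linarith) hrcm.le hrm hr
  obtain ⟨C, hC, hbound⟩ := exists_add_abs_sub_le_mul_exp_of_eq_mul_logRatio_add hrmp h𝔯
    (tortoiseCoeff_pos hΛ hrm.ne' (hAm ▸ inv_lt_zero.2 hPm))
    (tortoiseCoeff_neg hΛ (by linarith) (hAp ▸ inv_pos.2 hPp)) hκm' hκp' hH hXH hrfun hrange
    (by positivity) hF
  exact ⟨C, hC, .of_forall fun x => (hbound x).2, .of_forall fun x => (hbound x).1⟩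

/-- Exponential convergence at the horizons in the Regge–Wheeler coordinate: with
`F(r) = 1 - 2M/r + Q²/r² - Λr²/3` positive on `(r_-, r_+)`, `x(r) = -(3/Λ) Σ_α A_α r_α²
ln|(r-r_α)/(𝔯-r_α)|` (so `x(𝔯) = 0`), and `rfun` the inverse of `x`, one has
`F(r(x)) + |r(x) - r_±| ≤ C e^{2κ_± x}` as `x → ±∞`, where `2κ_± = F'(r_±)`. -/
theorem stmt14 (M Q Λ : ℝ) (hM : 0 < M) (hΛ : 0 < Λ)
    (rn rc rm rp 𝔯 : ℝ) (hord : rn < 0 ∧ 0 < rc ∧ rc < rm ∧ rm < rp)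
    (h𝔯 : 𝔯 ∈ Set.Ioo rm rp)
    (F : ℝ → ℝ)
    (hF : ∀ r : ℝ, r ≠ 0 → F r = 1 - 2 * M / r + Q ^ 2 / r ^ 2 - Λ * r ^ 2 / 3)
    (hfact : ∀ r : ℝ, r ≠ 0 →
      F r = -(Λ / (3 * r ^ 2)) * ((r - rn) * (r - rc) * (r - rm) * (r - rp)))
    (hFpos : ∀ r ∈ Set.Ioo rm rp, 0 < F r)
    (An Ac Am Ap : ℝ)
    (hAn : An = ((rn - rc) * (rn - rm) * (rn - rp))⁻¹)
    (hAc : Ac = ((rc - rn) * (rc - rm) * (rc - rp))⁻¹)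
    (hAm : Am = ((rm - rn) * (rm - rc) * (rm - rp))⁻¹)
    (hAp : Ap = ((rp - rn) * (rp - rc) * (rp - rm))⁻¹)
    (X : ℝ → ℝ)
    (hX : ∀ r ∈ Set.Ioo rm rp, X r = -(3 / Λ) *
      (An * rn ^ 2 * Real.log |(r - rn) / (𝔯 - rn)|
        + Ac * rc ^ 2 * Real.log |(r - rc) / (𝔯 - rc)|
        + Am * rm ^ 2 * Real.log |(r - rm) / (𝔯 - rm)|
        + Ap * rp ^ 2 * Real.log |(r - rp) / (𝔯 - rp)|))
    (rfun : ℝ → ℝ)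
    (hrfun : ∀ r ∈ Set.Ioo rm rp, rfun (X r) = r)
    (hrange : ∀ x : ℝ, rfun x ∈ Set.Ioo rm rp)
    (κm κp : ℝ) (hκm : HasDerivAt F (2 * κm) rm) (hκp : HasDerivAt F (2 * κp) rp) :
    ∃ C : ℝ, 0 < C ∧
      (∀ᶠ x in atTop, F (rfun x) + |rfun x - rp| ≤ C * Real.exp (2 * κp * x)) ∧
      (∀ᶠ x in atBot, F (rfun x) + |rfun x - rm| ≤ C * Real.exp (2 * κm * x)) :=
  stmt14_general Λ hΛ rn rc rm rp 𝔯 hord h𝔯 F hfact An Ac Am Ap hAm hAp X hX rfun hrfun hrange κm κp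
    hκm hκp
end
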